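/- Let S be a numerical semigroup with multiplicity e, let g ∈ D_k, and suppose g + e = Σ_j a_j n_j is a maximal representation with Σ_j a_j = k + p, p ≥ 1. If y ∈ C_h is induced by this representation (i.e. y = Σ b_j n_j with 0 ≤ b_j ≤ a_j and Σ b_j = h) and h ≤ max{p+1, k_0} where k_0 = min{k : D_k ≠ ∅}, then y belongs to the Apéry set of S with respect to e. -/

import Mathlib

open Set

/-- A numerical semigroup: a cofinite submonoid of ℕ. -/
def IsNumSgp (S : Set ℕ) : Prop :=
  0 ∈ S ∧ (∀ a ∈ S, ∀ b ∈ S, a + b ∈ S) ∧ Sᶜ.Finite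

/-- The maximal ideal `M = S \ {0}`. -/
def MS (S : Set ℕ) : Set ℕ := S \ {0}

/-- The multiplicity `e` of `S`, the smallest nonzero element. -/
noncomputable def mult (S : Set ℕ) : ℕ := sInf (MS S)

/-- `nM S h` is the set of sums of `h` elements of `M = S \ {0}` (with `nM S 0 = {0}`). -/
def nM (S : Set ℕ) : ℕ → Set ℕ
  | 0 => {0}
  | k + 1 => {x | ∃ a ∈ MS S, ∃ b ∈ nM S k, x = a + b}

/-- The order of `s`: the largest `h` with `s ∈ hM`. -/
noncomputable def ordS (S : Set ℕ) (s : ℕ) : ℕ := sSup {h | s ∈ nM S h}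

/-- The Apéry set of `S` with respect to the multiplicity `e`:
elements `s ∈ S` with `s - e ∉ S`. -/
def Ap (S : Set ℕ) : Set ℕ := {s ∈ S | ∀ t ∈ S, t + mult S ≠ s}

/-- Elements of the Apéry set of order `k`. -/
def ApK (S : Set ℕ) (k : ℕ) : Set ℕ := {s ∈ Ap S | ordS S s = k}

/-- `C_k = {s ∈ S : ord s = k and s - e ∉ (k-1)M}`. -/
def CK (S : Set ℕ) (k : ℕ) : Set ℕ :=
  {s ∈ S | ordS S s = k ∧ ∀ t ∈ nM S (k - 1), t + mult S ≠ s}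

/-- `D_k = {s ∈ S : ord s = k-1 and ord (s+e) > k}`. -/
def DK (S : Set ℕ) (k : ℕ) : Set ℕ :=
  {s ∈ S | ordS S s = k - 1 ∧ k < ordS S (s + mult S)}

/-- The Hilbert function of `R = k[[S]]`: `H(0) = 1`, `H(n) = |nM \ (n+1)M|`. -/
noncomputable def HF (S : Set ℕ) (n : ℕ) : ℕ := (nM S n \ nM S (n + 1)).ncard

/-- The set of minimal generators of `S`. -/
def MinGens (S : Set ℕ) : Set ℕ :=
  MS S \ {x | ∃ a ∈ MS S, ∃ b ∈ MS S, x = a + b}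

/-- `a` is a maximal representation of `s`: a finitely supported coefficient
function on the minimal generators with `Σ aⱼ nⱼ = s` and `Σ aⱼ = ord s`. -/
def IsMaxRep (S : Set ℕ) (s : ℕ) (a : ℕ →₀ ℕ) : Prop :=
  (↑a.support : Set ℕ) ⊆ MinGens S ∧
  (a.sum fun n c => c * n) = s ∧
  (a.sum fun _ c => c) = ordS S s

/-- `|Supp(s)|`: the maximal number of distinct minimal generators appearing
in a maximal representation of `s`. -/
noncomputable def SuppCard (S : Set ℕ) (s : ℕ) : ℕ :=
  sSup {q | ∃ a : ℕ →₀ ℕ, IsMaxRep S s a ∧ a.support.card = q}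

/-- The Frobenius number of `S`. -/
noncomputable def Frob (S : Set ℕ) : ℕ := sSup Sᶜ

/-!
If `y = t + e` with `t ∈ S`, then `y ∈ C_h` forces `ord t ≤ h - 2`, so `t ∈ D_{ord t + 1}`
and `k₀ ≤ ord t + 1 < h`; hence `h ≤ p + 1`. Removing `y` from the representation of `g + e`
writes `g = t + z` with `z ∈ (k + p - h)M`, so
`k - 1 = ord g ≥ ord t + k + p - h ≥ ord t + k - 1`.
Thus `t = 0` and `y = e`, which has order `1 < h`.
-/

section NumSgp

variable {S : Set ℕ}

lemma mult_mem_MS (hS : IsNumSgp S) : mult S ∈ MS S :=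
  Nat.sInf_mem ((compl_compl S ▸ hS.2.2.infinite_compl).sdiff (finite_singleton 0)).nonempty

lemma mult_pos (hS : IsNumSgp S) : 0 < mult S :=
  Nat.pos_of_ne_zero (mult_mem_MS hS).2

lemma mem_nM_one {x : ℕ} (hx : x ∈ MS S) : x ∈ nM S 1 :=
  ⟨x, hx, 0, rfl, rfl⟩

lemma mult_mul_le_of_mem_nM : ∀ {n x : ℕ}, x ∈ nM S n → mult S * n ≤ x
  | 0, _, _ => by simp
  | _ + 1, _, ⟨a, ha, c, hc, rfl⟩ => by
    have := mult_mul_le_of_mem_nM hc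
    have : mult S ≤ a := Nat.sInf_le ha
    rw [Nat.mul_succ]
    omega

lemma add_mem_nM : ∀ {m n x y : ℕ}, x ∈ nM S m → y ∈ nM S n → x + y ∈ nM S (m + n)
  | 0, _, _, _, rfl, hy => by simpa using hy
  | m + 1, n, _, y, ⟨a, ha, c, hc, rfl⟩, hy => by
    rw [Nat.add_right_comm]
    exact ⟨a, ha, c + y, add_mem_nM hc hy, by ring⟩

lemma mul_mem_nM {a : ℕ} (ha : a ∈ MS S) : ∀ c : ℕ, c * a ∈ nM S c
  | 0 => by simp [nM]
  | c + 1 => by simpa [Nat.succ_mul] using add_mem_nM (mul_mem_nM ha c) (mem_nM_one ha)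

lemma sum_mul_mem_nM (s : Finset ℕ) (hs : (↑s : Set ℕ) ⊆ MS S) (m : ℕ → ℕ) :
    ∑ i ∈ s, m i * i ∈ nM S (∑ i ∈ s, m i) := by
  induction s using Finset.induction_on with
  | empty => simp [nM]
  | insert i s hi ih =>
    rw [Finset.coe_insert, insert_subset_iff] at hs
    rw [Finset.sum_insert hi, Finset.sum_insert hi]
    exact add_mem_nM (mul_mem_nM hs.1 (m i)) (ih hs.2)

lemma finsupp_sum_mem_nM (c : ℕ →₀ ℕ) (hc : (↑c.support : Set ℕ) ⊆ MS S) :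
    (c.sum fun n k => k * n) ∈ nM S (c.sum fun _ k => k) :=
  sum_mul_mem_nM c.support hc c

lemma bddAbove_setOf_mem_nM (hS : IsNumSgp S) (s : ℕ) : BddAbove {h | s ∈ nM S h} :=
  ⟨s, fun _ hm => le_trans (Nat.le_mul_of_pos_left _ (mult_pos hS)) (mult_mul_le_of_mem_nM hm)⟩

lemma le_ordS_of_mem_nM (hS : IsNumSgp S) {s m : ℕ} (hm : s ∈ nM S m) : m ≤ ordS S s :=
  le_csSup (bddAbove_setOf_mem_nM hS s) hm

lemma mem_nM_ordS (hS : IsNumSgp S) {s : ℕ} (hs : s ∈ S) : s ∈ nM S (ordS S s) := by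
  refine Nat.sSup_mem ?_ (bddAbove_setOf_mem_nM hS s)
  rcases eq_or_ne s 0 with rfl | h0
  · exact ⟨0, rfl⟩
  · exact ⟨1, mem_nM_one ⟨hs, h0⟩⟩

lemma eq_zero_of_ordS_eq_zero (hS : IsNumSgp S) {s : ℕ} (hs : s ∈ S) (h : ordS S s = 0) :
    s = 0 := by
  by_contra h0
  simpa [h] using le_ordS_of_mem_nM hS (mem_nM_one ⟨hs, h0⟩)

lemma ordS_mult (hS : IsNumSgp S) : ordS S (mult S) = 1 := by
  have hle := mult_mul_le_of_mem_nM (mem_nM_ordS hS (mult_mem_MS hS).1)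
  have hge := le_ordS_of_mem_nM hS (mem_nM_one (mult_mem_MS hS))
  have := mult_pos hS
  nlinarith

lemma ordS_add_le (hS : IsNumSgp S) {s x n : ℕ} (hs : s ∈ S) (hx : x ∈ nM S n) :
    ordS S s + n ≤ ordS S (s + x) :=
  le_ordS_of_mem_nM hS (add_mem_nM (mem_nM_ordS hS hs) hx)

lemma ordS_add_two_le_of_add_mult_mem_CK (hS : IsNumSgp S) {t h : ℕ} (ht : t ∈ S)
    (hy : t + mult S ∈ CK S h) : ordS S t + 2 ≤ h := by
  obtain ⟨-, hord, hCK⟩ := hy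
  have hle := ordS_add_le hS ht (mem_nM_one (mult_mem_MS hS))
  have hne : ordS S t ≠ h - 1 := fun heq => hCK t (heq ▸ mem_nM_ordS hS ht) rfl
  omega

lemma mem_DK_ordS_succ {t : ℕ} (ht : t ∈ S) (hlt : ordS S t + 1 < ordS S (t + mult S)) :
    t ∈ DK S (ordS S t + 1) :=
  ⟨ht, rfl, hlt⟩

end NumSgp

lemma Finsupp.sum_add_sum_tsub {ι M : Type*} [AddCommMonoid M] {a b : ι →₀ ℕ} (hb : b ≤ a)
    {f : ι → ℕ → M} (h_zero : ∀ i, f i 0 = 0)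
    (h_add : ∀ i c₁ c₂, f i (c₁ + c₂) = f i c₁ + f i c₂) :
    b.sum f + (a - b).sum f = a.sum f := by
  rw [← Finsupp.sum_add_index' h_zero h_add, add_tsub_cancel_of_le hb]

theorem stmt5_general (S : Set ℕ) (hS : IsNumSgp S) (k p : ℕ)
    (g : ℕ) (hg : g ∈ DK S k) (a : ℕ →₀ ℕ) (ha : IsMaxRep S (g + mult S) a)
    (hsum : (a.sum fun _ c => c) = k + p)
    (b : ℕ →₀ ℕ) (hb : b ≤ a) (h : ℕ) (hh : (b.sum fun _ c => c) = h)
    (y : ℕ) (hy : y = b.sum fun n c => c * n) (hyC : y ∈ CK S h)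
    (hmax : h ≤ max (p + 1) (sInf {k | (DK S k).Nonempty})) :
    y ∈ Ap S := by
  refine ⟨hyC.1, fun t ht hty => ?_⟩
  subst hty
  have hordy : ordS S (t + mult S) = h := hyC.2.1
  have hth : ordS S t + 2 ≤ h := ordS_add_two_le_of_add_mult_mem_CK hS ht hyC
  have hk₀ : sInf {k | (DK S k).Nonempty} ≤ ordS S t + 1 :=
    Nat.sInf_le ⟨t, mem_DK_ordS_succ ht (by omega)⟩
  have hz := finsupp_sum_mem_nM (a - b) (fun _ hn => (ha.1 (Finsupp.support_tsub hn)).1)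
  have hlen : h + (a - b).sum (fun _ c => c) = k + p := by
    rw [← hh, ← hsum]
    exact Finsupp.sum_add_sum_tsub hb (fun _ => rfl) (fun _ _ _ => rfl)
  have hval : t + mult S + (a - b).sum (fun n c => c * n) = g + mult S := by
    rw [hy, ← ha.2.1]
    exact Finsupp.sum_add_sum_tsub hb (fun _ => zero_mul _) (fun _ _ _ => add_mul _ _ _)
  have hordg := ordS_add_le hS ht hz
  rw [show t + (a - b).sum (fun n c => c * n) = g by omega, hg.2.1] at hordg
  have ht0 : t = 0 := eq_zero_of_ordS_eq_zero hS ht (by omega)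
  subst ht0
  rw [zero_add, ordS_mult hS] at hordy
  omega

theorem stmt5 (S : Set ℕ) (hS : IsNumSgp S) (k p : ℕ) (hp : 1 ≤ p)
    (g : ℕ) (hg : g ∈ DK S k) (a : ℕ →₀ ℕ) (ha : IsMaxRep S (g + mult S) a)
    (hsum : (a.sum fun _ c => c) = k + p)
    (b : ℕ →₀ ℕ) (hb : b ≤ a) (h : ℕ) (hh : (b.sum fun _ c => c) = h)
    (y : ℕ) (hy : y = b.sum fun n c => c * n) (hyC : y ∈ CK S h)
    (hmax : h ≤ max (p + 1) (sInf {k | (DK S k).Nonempty})) :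
    y ∈ Ap S :=
  stmt5_general S hS k p g hg a ha hsum b hb h hh y hy hyC hmax
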